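/- Let H₁,…,H_{n−1} be C² functions on an open set Ω ⊆ ℝⁿ, write ℋ = (H₁,…,H_{n−1})ᵀ, Γ = det(∂₁ℋ,…,∂_{n−1}ℋ) and Γᵢ = det(∂₁ℋ,…,∂_{i−1}ℋ, ∂ₙℋ, ∂_{i+1}ℋ,…,∂_{n−1}ℋ). Then the determinant identity ∂ₙΓ − ∂₁Γ₁ − … − ∂_{n−1}Γ_{n−1} = 0 holds on Ω. -/

import Mathlib

/-- Partial derivative of a function on `ℝⁿ` in the `i`-th coordinate direction. -/
noncomputable def pd {n : ℕ} (i : Fin n) (f : (Fin n → ℝ) → ℝ) (x : Fin n → ℝ) : ℝ :=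
  fderiv ℝ f x (Pi.single i 1)

/-- The matrix `(∂₁ℋ, …, ∂_{n-1}ℋ)` whose columns are the partial derivatives of
`ℋ = (H₁,…,H_{n-1})` with respect to the first `n - 1` variables. -/
noncomputable def gradMat {m : ℕ} (H : Fin (m + 1) → (Fin (m + 2) → ℝ) → ℝ)
    (x : Fin (m + 2) → ℝ) : Matrix (Fin (m + 1)) (Fin (m + 1)) ℝ :=
  Matrix.of fun k j => pd (Fin.castSucc j) (H k) x

/-- `Γ = det(∂₁ℋ,…,∂_{n-1}ℋ)` as a function of `x`. -/
noncomputable def Gamma {m : ℕ} (H : Fin (m + 1) → (Fin (m + 2) → ℝ) → ℝ)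
    (x : Fin (m + 2) → ℝ) : ℝ := (gradMat H x).det

/-- `Γᵢ`, with the `i`-th column replaced by `∂ₙℋ`, as a function of `x`. -/
noncomputable def GammaI {m : ℕ} (H : Fin (m + 1) → (Fin (m + 2) → ℝ) → ℝ)
    (i : Fin (m + 1)) (x : Fin (m + 2) → ℝ) : ℝ :=
  ((gradMat H x).updateCol i (fun k => pd (Fin.last (m + 1)) (H k) x)).det

/-!
Γ and Γᵢ are minors of the Jacobian of ℋ. Differentiating a determinant row by row, ∂ₐ of such a
minor is the sum of the determinants in which one row ∂_bℋ is replaced by ∂ₐ∂_bℋ. In ∂ᵢΓᵢ, the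
term that differentiates the row ∂ₙℋ is det(…, ∂ᵢ∂ₙℋ, …); by Schwarz these terms add up to ∂ₙΓ.
The remaining terms det(…, ∂ₙℋ at i, …, ∂ᵢ∂ⱼℋ at j, …) cancel in pairs (i, j) ↔ (j, i), since
swapping two rows changes the sign of a determinant and ∂ᵢ∂ⱼℋ = ∂ⱼ∂ᵢℋ.
-/

open Finset Function

theorem Finset.sum_sum_erase_eq_zero_of_antisymm {ι M : Type*} [DecidableEq ι] [AddCommGroup M]
    (s : Finset ι) {F : ι → ι → M} (hF : ∀ i j, i ≠ j → F j i = -F i j) :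
    ∑ i ∈ s, ∑ j ∈ s.erase i, F i j = 0 := by
  rw [sum_sigma']
  refine sum_involution (fun p _ => ⟨p.2, p.1⟩) ?_ ?_ ?_ ?_
  · rintro ⟨i, j⟩ hp
    simp only [mem_sigma, mem_erase] at hp
    rw [hF i j hp.2.1.symm, add_neg_cancel]
  · rintro ⟨i, j⟩ hp - h
    simp only [mem_sigma, mem_erase] at hp
    exact hp.2.1 (congrArg Sigma.fst h)
  · rintro ⟨i, j⟩ hp
    simp only [mem_sigma, mem_erase] at hp ⊢
    exact ⟨hp.2.2, hp.2.1.symm, hp.1⟩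
  · rintro ⟨i, j⟩ _
    rfl

namespace AlternatingMap

variable {R M N ι : Type*} [Semiring R] [AddCommMonoid M] [Module R M] [AddCommGroup N]
  [Module R N] [Fintype ι] [DecidableEq ι] (f : M [⋀^ι]→ₗ[R] N)

theorem sum_sum_erase_map_update_update_eq_zero (v : ι → M) (c : M) {S : ι → ι → M}
    (hS : ∀ i j, S i j = S j i) :
    ∑ i, ∑ j ∈ univ.erase i, f (update (update v i c) j (S i j)) = 0 := by
  refine sum_sum_erase_eq_zero_of_antisymm _ fun i j hij => ?_
  have hswap : update (update v j c) i (S j i) =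
      update (update v i c) j (S i j) ∘ Equiv.swap i j := by
    funext t
    rcases eq_or_ne t i with rfl | hti
    · simp [hS]
    rcases eq_or_ne t j with rfl | htj
    · simp [hti, hij]
    · simp [Equiv.swap_apply_of_ne_of_ne hti htj, hti, htj]
  rw [hswap, f.map_swap _ hij]

theorem sum_sum_map_update_comp_update {κ : Type*} (w : κ → M) {S : κ → κ → M}
    (hS : ∀ a b, S a b = S b a) (e : ι → κ) (ℓ : κ) :
    ∑ i, ∑ j, f (update (w ∘ update e i ℓ) j (S (e i) (update e i ℓ j))) =
      ∑ j, f (update (w ∘ e) j (S ℓ (e j))) := by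
  have hsplit : ∀ i, ∑ j, f (update (w ∘ update e i ℓ) j (S (e i) (update e i ℓ j))) =
      f (update (w ∘ e) i (S ℓ (e i))) +
        ∑ j ∈ univ.erase i, f (update (update (w ∘ e) i (w ℓ)) j (S (e i) (e j))) := by
    intro i
    rw [← add_sum_erase _ _ (mem_univ i), comp_update]
    congr 1
    · rw [update_self, update_idem, hS]
    · refine sum_congr rfl fun j hj => ?_
      rw [update_of_ne (ne_of_mem_erase hj)]
  simp_rw [hsplit, sum_add_distrib,
    f.sum_sum_erase_map_update_update_eq_zero _ _ (S := fun i j => S (e i) (e j)) fun _ _ => hS _ _,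
    add_zero]

end AlternatingMap
theorem fderiv_detRowAlternating_apply {𝕜 E ι : Type*} [NontriviallyNormedField 𝕜]
    [NormedAddCommGroup E] [NormedSpace 𝕜 E] [Fintype ι] [DecidableEq ι] {g : ι → E → ι → 𝕜}
    {x : E} (hg : ∀ j, DifferentiableAt 𝕜 (g j) x) (v : E) :
    fderiv 𝕜 (fun y => Matrix.detRowAlternating fun j => g j y) x v =
      ∑ j, Matrix.detRowAlternating (update (fun j => g j x) j (fderiv 𝕜 (g j) x v)) := by
  let D : ContinuousMultilinearMap 𝕜 (fun _ : ι => ι → 𝕜) 𝕜 :=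
    ⟨Matrix.detRowAlternating.toMultilinearMap, continuous_id.matrix_det⟩
  have hD : HasFDerivAt (fun y => Matrix.detRowAlternating fun j => g j y) _ x :=
    HasFDerivAt.multilinear_comp D fun j => (hg j).hasFDerivAt
  rw [hD.fderiv]
  simp only [_root_.sum_apply, ContinuousLinearMap.comp_apply,
    ContinuousMultilinearMap.toContinuousLinearMap_apply]
  rfl

section SecondPartials

variable {n : ℕ} {f : (Fin n → ℝ) → ℝ} {x : Fin n → ℝ}

theorem pd_pd_eq_fderiv_fderiv (hf : DifferentiableAt ℝ (fderiv ℝ f) x) (a b : Fin n) :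
    pd a (pd b f) x = fderiv ℝ (fderiv ℝ f) x (Pi.single a 1) (Pi.single b 1) := by
  unfold pd
  rw [fderiv_clm_apply hf (differentiableAt_const _)]
  simp

theorem ContDiffAt.differentiableAt_fderiv (hf : ContDiffAt ℝ 2 f x) :
    DifferentiableAt ℝ (fderiv ℝ f) x :=
  (hf.fderiv_right (m := 1) (by norm_num)).differentiableAt one_ne_zero

theorem ContDiffAt.differentiableAt_pd (hf : ContDiffAt ℝ 2 f x) (b : Fin n) :
    DifferentiableAt ℝ (pd b f) x :=
  hf.differentiableAt_fderiv.clm_apply (differentiableAt_const _)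

theorem ContDiffAt.pd_pd_comm (hf : ContDiffAt ℝ 2 f x) (a b : Fin n) :
    pd a (pd b f) x = pd b (pd a f) x := by
  rw [pd_pd_eq_fderiv_fderiv hf.differentiableAt_fderiv,
    pd_pd_eq_fderiv_fderiv hf.differentiableAt_fderiv,
    hf.isSymmSndFDerivAt minSmoothness_of_isRCLikeNormedField.le]

end SecondPartials

noncomputable def pdVec {n : ℕ} {κ : Type*} (b : Fin n) (H : κ → (Fin n → ℝ) → ℝ)
    (y : Fin n → ℝ) : κ → ℝ :=
  fun k => pd b (H k) y

-- The rows are the partials `∂_{σ j}ℋ`, which the paper writes as columns.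
noncomputable def jacobianMinor {n : ℕ} {ι : Type*} [Fintype ι] [DecidableEq ι]
    (H : ι → (Fin n → ℝ) → ℝ) (σ : ι → Fin n) (y : Fin n → ℝ) : ℝ :=
  Matrix.detRowAlternating fun j => pdVec (σ j) H y

theorem fderiv_pdVec_apply {n : ℕ} {κ : Type*} [Fintype κ] {H : κ → (Fin n → ℝ) → ℝ}
    {x : Fin n → ℝ} (hH : ∀ k, ContDiffAt ℝ 2 (H k) x) (a b : Fin n) :
    fderiv ℝ (pdVec b H) x (Pi.single a 1) = pdVec a (fun k => pd b (H k)) x := by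
  unfold pdVec
  rw [fderiv_pi fun k => (hH k).differentiableAt_pd b]
  rfl

theorem pd_jacobianMinor {n : ℕ} {ι : Type*} [Fintype ι] [DecidableEq ι]
    {H : ι → (Fin n → ℝ) → ℝ} {x : Fin n → ℝ} (hH : ∀ k, ContDiffAt ℝ 2 (H k) x)
    (σ : ι → Fin n) (a : Fin n) :
    pd a (jacobianMinor H σ) x = ∑ j, Matrix.detRowAlternating
      (update (fun j => pdVec (σ j) H x) j (pdVec a (fun k => pd (σ j) (H k)) x)) := by
  unfold jacobianMinor
  conv_lhs => unfold pd
  rw [fderiv_detRowAlternating_apply fun j => ?_]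
  · simp_rw [fderiv_pdVec_apply hH]
  · unfold pdVec
    exact differentiableAt_pi.2 fun k => (hH k).differentiableAt_pd _

theorem Gamma_eq_jacobianMinor {m : ℕ} (H : Fin (m + 1) → (Fin (m + 2) → ℝ) → ℝ) :
    Gamma H = jacobianMinor H Fin.castSucc := by
  funext y
  rw [Gamma, ← Matrix.det_transpose]
  rfl

theorem GammaI_eq_jacobianMinor {m : ℕ} (H : Fin (m + 1) → (Fin (m + 2) → ℝ) → ℝ)
    (i : Fin (m + 1)) :
    GammaI H i = jacobianMinor H (update Fin.castSucc i (Fin.last (m + 1))) := by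
  funext y
  rw [GammaI, ← Matrix.det_transpose, ← Matrix.updateRow_transpose, jacobianMinor]
  change _ = Matrix.detRowAlternating ((pdVec · H y) ∘ update Fin.castSucc i (Fin.last (m + 1)))
  rw [comp_update]
  rfl

/-- For `C²` functions `H₁,…,H_{n-1}` on an open set `Ω ⊆ ℝⁿ`
(here `n = m + 2`), the determinant identity `∂ₙΓ - ∂₁Γ₁ - … - ∂_{n-1}Γ_{n-1} = 0`
holds on `Ω`. -/
theorem determinant_identity {m : ℕ}
    (H : Fin (m + 1) → (Fin (m + 2) → ℝ) → ℝ)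
    (Ω : Set (Fin (m + 2) → ℝ)) (hΩ : IsOpen Ω)
    (hH : ∀ k, ContDiffOn ℝ 2 (H k) Ω) :
    ∀ x ∈ Ω,
      pd (Fin.last (m + 1)) (Gamma H) x - ∑ i, pd i.castSucc (GammaI H i) x = 0 := by
  intro x hx
  have hH₂ : ∀ k, ContDiffAt ℝ 2 (H k) x := fun k => (hH k).contDiffAt (hΩ.mem_nhds hx)
  simp_rw [Gamma_eq_jacobianMinor, GammaI_eq_jacobianMinor, pd_jacobianMinor hH₂]
  rw [sub_eq_zero, eq_comm]
  exact Matrix.detRowAlternating.sum_sum_map_update_comp_update (pdVec · H x)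
    (fun a b => funext fun k => (hH₂ k).pd_pd_comm a b) Fin.castSucc (Fin.last (m + 1))
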